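/- arXiv:2001.02191 — 8 statements merged into one kernel-verified Lean document; each statement's English description precedes it below -/
import Mathlib

section
/- Let G be a finite simple graph with vertex set V and edge set E, and let s, t ∈ V. Define a simple graph G' whose vertex set consists of two disjoint copies (indexed 0 and 1) of V ∪ E together with one additional vertex w, and whose edges are: for each copy c ∈ {0,1} and each edge e = {u,v} ∈ E, the edges {(u,c),(e,c)} and {(e,c),(v,c)}; together with the three edges {(s,0),(s,1)}, {(t,0),w}, and {(t,1),w}. Then G' is 2-colorable (equivalently, G' contains no closed walk of odd length) if and only if s and t are not connected in G. -/
/-!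
If `s` and `t` are connected, every `G`-path from `s` to `t` lifts to each copy with every
edge subdivided, so in a 2-colouring both copies of `s` get the colour of the corresponding
copy of `t`; the two copies of `t` share the neighbour `w`, hence all four get one colour,
which the edge between the copies of `s` forbids. Otherwise, colour everything by its position
in the subdivision and swap the colours on the second copy of the component of `s`: the edge
between the copies of `s` then joins different colours, while `t` lies outside that component,
so both copies of `t` keep the colour opposite to `w`.
-/

open Sum

namespace SimpleGraph

variable {V W α : Type*}

theorem Coloring.eq_of_adj_of_adj {H : SimpleGraph W} (C : H.Coloring (Fin 2)) {a b w : W}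
    (ha : H.Adj a w) (hb : H.Adj b w) : C a = C b := by
  have := C.valid ha
  have := C.valid hb
  omega

theorem Coloring.eq_of_reachable_of_commonNeighbor {G : SimpleGraph V} {H : SimpleGraph W}
    (C : H.Coloring (Fin 2)) (φ : V → W)
    (hφ : ∀ ⦃u v⦄, G.Adj u v → ∃ w, H.Adj (φ u) w ∧ H.Adj (φ v) w) {a b : V}
    (hab : G.Reachable a b) : C (φ a) = C (φ b) := by
  rw [reachable_iff_reflTransGen] at hab
  induction hab with
  | refl => rfl
  | tail _ hbc ih =>
    obtain ⟨w, hw⟩ := hφ hbc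
    exact ih.trans (C.eq_of_adj_of_adj hw.1 hw.2)

theorem reachable_of_mem_edgeSet {G : SimpleGraph V} {e : Sym2 V} (he : e ∈ G.edgeSet)
    {u v : V} (hu : u ∈ e) (hv : v ∈ e) : G.Reachable u v := by
  obtain rfl | huv := eq_or_ne u v
  · rfl
  · rw [(Sym2.mem_and_mem_iff huv).mp ⟨hu, hv⟩, mem_edgeSet] at he
    exact he.reachable

theorem colorable_fromRel [Fintype α] {r : W → W → Prop} (f : W → α)
    (hf : ∀ x y, r x y → f x ≠ f y) : (fromRel r).Colorable (Fintype.card α) :=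
  (Coloring.mk f fun h =>
    ((fromRel_adj _ _ _).mp h).2.elim (hf _ _) fun h' => (hf _ _ h').symm).colorable

end SimpleGraph

open SimpleGraph

section Gadget

variable {V : Type} (G : SimpleGraph V) (s t : V)

def reachabilityGadgetRel (x y : Option ((V ⊕ G.edgeSet) × Bool)) : Prop :=
  (∃ (u : V) (e : G.edgeSet) (c : Bool),
      u ∈ (e : Sym2 V) ∧ x = some (inl u, c) ∧ y = some (inr e, c)) ∨
    (x = some (inl s, false) ∧ y = some (inl s, true)) ∨
    (x = some (inl t, false) ∧ y = none) ∨
    (x = some (inl t, true) ∧ y = none)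

abbrev reachabilityGadget : SimpleGraph (Option ((V ⊕ G.edgeSet) × Bool)) :=
  fromRel (reachabilityGadgetRel G s t)

variable {G s t}

theorem reachabilityGadget_adj_of_rel {x y : Option ((V ⊕ G.edgeSet) × Bool)}
    (hxy : x ≠ y) (h : reachabilityGadgetRel G s t x y) : (reachabilityGadget G s t).Adj x y :=
  (fromRel_adj _ _ _).mpr ⟨hxy, .inl h⟩

theorem reachabilityGadget_adj_inl_inr {u : V} {e : G.edgeSet} (hu : u ∈ (e : Sym2 V))
    (c : Bool) : (reachabilityGadget G s t).Adj (some (inl u, c)) (some (inr e, c)) :=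
  reachabilityGadget_adj_of_rel (by simp) (.inl ⟨u, e, c, hu, rfl, rfl⟩)

theorem not_colorable_reachabilityGadget (h : G.Reachable s t) :
    ¬ (reachabilityGadget G s t).Colorable 2 := by
  rintro ⟨C⟩
  have copy_eq (c : Bool) : C (some (inl s, c)) = C (some (inl t, c)) :=
    C.eq_of_reachable_of_commonNeighbor (fun u => some (inl u, c))
      (fun u v huv => ⟨some (inr ⟨s(u, v), huv⟩, c),
        reachabilityGadget_adj_inl_inr (by simp) c, reachabilityGadget_adj_inl_inr (by simp) c⟩) h
  have t_eq : C (some (inl t, false)) = C (some (inl t, true)) :=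
    C.eq_of_adj_of_adj
      (reachabilityGadget_adj_of_rel (by simp) (.inr (.inr (.inl ⟨rfl, rfl⟩))))
      (reachabilityGadget_adj_of_rel (by simp) (.inr (.inr (.inr ⟨rfl, rfl⟩))))
  exact C.valid (reachabilityGadget_adj_of_rel (by simp) (.inr (.inl ⟨rfl, rfl⟩)))
    ((copy_eq false).trans (t_eq.trans (copy_eq true).symm))

variable (G s) in
open Classical in
noncomputable def reachabilityGadgetColoring : Option ((V ⊕ G.edgeSet) × Bool) → Bool
  | none => true
  | some (inl u, c) => c && decide (G.Reachable s u)
  | some (inr e, c) => !(c && decide (∃ u ∈ (e : Sym2 V), G.Reachable s u))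

theorem colorable_reachabilityGadget (h : ¬ G.Reachable s t) :
    (reachabilityGadget G s t).Colorable 2 := by
  refine Fintype.card_bool ▸ colorable_fromRel (reachabilityGadgetColoring G s) ?_
  rintro x y (⟨u, e, c, hu, rfl, rfl⟩ | ⟨rfl, rfl⟩ | ⟨rfl, rfl⟩ | ⟨rfl, rfl⟩)
  · have hsu : (∃ v ∈ (e : Sym2 V), G.Reachable s v) ↔ G.Reachable s u :=
      ⟨fun ⟨v, hv, hsv⟩ => hsv.trans (reachable_of_mem_edgeSet e.2 hv hu),
        fun hsu => ⟨u, hu, hsu⟩⟩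
    by_cases hsu' : G.Reachable s u <;>
      simp [reachabilityGadgetColoring, hsu, hsu']
  · simp [reachabilityGadgetColoring]
  · simp [reachabilityGadgetColoring]
  · simp [reachabilityGadgetColoring, h]

end Gadget

theorem stmt_0_general {V : Type} (G : SimpleGraph V) (s t : V) :
    (SimpleGraph.fromRel (fun x y : Option ((V ⊕ G.edgeSet) × Bool) =>
      (∃ (u : V) (e : G.edgeSet) (c : Bool),
          u ∈ (e : Sym2 V) ∧ x = some (Sum.inl u, c) ∧ y = some (Sum.inr e, c)) ∨
      (x = some (Sum.inl s, false) ∧ y = some (Sum.inl s, true)) ∨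
      (x = some (Sum.inl t, false) ∧ y = none) ∨
      (x = some (Sum.inl t, true) ∧ y = none))).Colorable 2 ↔
      ¬ G.Reachable s t :=
  ⟨fun hcol hst => not_colorable_reachabilityGadget hst hcol, colorable_reachabilityGadget⟩

/-- Let `G` be a finite simple graph on `V` and `s t : V`. The graph `G'` on
two copies (indexed by `Bool`) of `V ⊕ E` plus one extra vertex `w` (represented by `none`),
with edges `{(u,c),(e,c)}` and `{(e,c),(v,c)}` for each edge `e = {u,v}` and copy `c`,
together with `{(s,0),(s,1)}`, `{(t,0),w}`, `{(t,1),w}`, is 2-colorable iff `s` and `t`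
are not connected in `G`. -/
theorem stmt_0 {V : Type} [Fintype V] (G : SimpleGraph V) (s t : V) :
    (SimpleGraph.fromRel (fun x y : Option ((V ⊕ G.edgeSet) × Bool) =>
      (∃ (u : V) (e : G.edgeSet) (c : Bool),
          u ∈ (e : Sym2 V) ∧ x = some (Sum.inl u, c) ∧ y = some (Sum.inr e, c)) ∨
      (x = some (Sum.inl s, false) ∧ y = some (Sum.inl s, true)) ∨
      (x = some (Sum.inl t, false) ∧ y = none) ∨
      (x = some (Sum.inl t, true) ∧ y = none))).Colorable 2 ↔
      ¬ G.Reachable s t :=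
  stmt_0_general G s t
end

section
/- Let G be a finite simple graph on vertex set V. Then G is 2-colorable if and only if for every vertex w ∈ V, the vertices (w,0) and (w,1) are not connected in the bipartite double cover DC(G). -/
/-- The bipartite double cover of a simple graph `G`: the graph on `V × Bool` in which
`(u,i)` is adjacent to `(v,j)` iff `u` is adjacent to `v` in `G` and `i ≠ j`. -/
def bipartiteDoubleCover {V : Type} (G : SimpleGraph V) : SimpleGraph (V × Bool) where
  Adj x y := G.Adj x.1 y.1 ∧ x.2 ≠ y.2
  symm := ⟨fun _ _ h => ⟨h.1.symm, h.2.symm⟩⟩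
  loopless := ⟨fun _ h => h.2 rfl⟩

open SimpleGraph hiding bipartiteDoubleCover

/-- Projection homomorphism from the double cover to `G`. -/
def dcFst {V : Type} (G : SimpleGraph V) : bipartiteDoubleCover G →g G where
  toFun := Prod.fst
  map_rel' h := h.1

/-- The second coordinate is a proper 2-coloring of the double cover. -/
def dcSnd {V : Type} (G : SimpleGraph V) : (bipartiteDoubleCover G).Coloring Bool :=
  Coloring.mk Prod.snd (fun h => h.2)

lemma dc_lift {V : Type} (G : SimpleGraph V) {a b : V} (h : G.Reachable a b) (j : Bool) :
    ∃ i, (bipartiteDoubleCover G).Reachable (a, j) (b, i) := by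
  obtain ⟨p⟩ := h
  induction p generalizing j with
  | nil => exact ⟨j, Reachable.refl _⟩
  | cons h q ih =>
    obtain ⟨i, hi⟩ := ih (!j)
    exact ⟨i, Reachable.trans (Adj.reachable ⟨h, by simp⟩) hi⟩

/-- a finite simple graph `G` is 2-colorable iff for every vertex `w`, the two
copies `(w,0)` and `(w,1)` of `w` are not connected in the bipartite double cover of `G`. -/
theorem stmt_1 {V : Type} [Fintype V] (G : SimpleGraph V) :
    G.Colorable 2 ↔
      ∀ w : V, ¬ (bipartiteDoubleCover G).Reachable (w, false) (w, true) := by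
  classical
  constructor
  · rintro ⟨c⟩ w ⟨p⟩
    have codd : Odd p.length := by
      rw [← Nat.not_even_iff_odd]
      intro he
      have := ((dcSnd G).even_length_iff_congr p).1 he
      exact Bool.false_ne_true (this.2 rfl)
    let c' : G.Coloring Bool := G.recolorOfEquiv finTwoEquiv c
    have hodd := (c'.odd_length_iff_not_congr (p.map (dcFst G))).1
      (by simpa using codd)
    have h2 : ¬ (c' w = true) ↔ (c' w = true) := hodd
    exact iff_not_self h2.symm
  · intro hw
    let rep : V → V := fun v => (G.connectedComponentMk v).out
    have hrep : ∀ v, G.Reachable (rep v) v := fun v =>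
      ConnectedComponent.exact (by exact Quot.out_eq _)
    let c : V → Bool := fun v =>
      decide ((bipartiteDoubleCover G).Reachable (rep v, false) (v, false))
    have valid : ∀ {u v : V}, G.Adj u v → c u ≠ c v := by
      intro u v huv hc
      have hrepeq : rep u = rep v := by
        simp only [rep, ConnectedComponent.connectedComponentMk_eq_of_adj huv]
      have a1 : (bipartiteDoubleCover G).Adj (u, false) (v, true) := ⟨huv, by simp⟩
      have a2 : (bipartiteDoubleCover G).Adj (u, true) (v, false) := ⟨huv, by simp⟩
      cases hcu : c u with
      | true =>
        have hu : (bipartiteDoubleCover G).Reachable (rep u, false) (u, false) := by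
          simpa [c] using hcu
        have hv : (bipartiteDoubleCover G).Reachable (rep u, false) (v, false) := by
          rw [hrepeq]
          simpa [c] using (hc ▸ hcu : c v = true)
        exact hw v (hv.symm.trans (hu.trans a1.reachable))
      | false =>
        have hcu' : ¬ (bipartiteDoubleCover G).Reachable (rep u, false) (u, false) := by
          simpa [c] using hcu
        have hcv' : ¬ (bipartiteDoubleCover G).Reachable (rep v, false) (v, false) := by
          simpa [c] using (hc ▸ hcu : c v = false)
        have hu : (bipartiteDoubleCover G).Reachable (rep u, false) (u, true) := by
          obtain ⟨i, hi⟩ := dc_lift G (hrep u) false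
          cases i with
          | true => exact hi
          | false => exact absurd hi hcu'
        have hv : (bipartiteDoubleCover G).Reachable (rep u, false) (v, true) := by
          rw [hrepeq]
          obtain ⟨i, hi⟩ := dc_lift G (hrep v) false
          cases i with
          | true => exact hi
          | false => exact absurd hi hcv'
        exact hw v ((hv.symm.trans (hu.trans a2.reachable)).symm)
    have col : G.Coloring Bool := Coloring.mk c (fun h => valid h)
    simpa using col.colorable
end

section
/- Let G be a finite simple graph on vertex set V. Construct the simple graph H with vertex set (V × {0,1} × V) ∪ {s*, t*}, where s* and t* are two new vertices, with the following edges: for each w ∈ V, (u,i,w) is adjacent to (v,j,w) if and only if u is adjacent to v in G and i ≠ j (so the subgraph induced on V × {0,1} × {w} is a copy of the bipartite double cover DC(G)); moreover, for each w ∈ V, s* is adjacent to (w,0,w) and t* is adjacent to (w,1,w). Then s* and t* are connected in H if and only if G is not 2-colorable. -/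
/-!
A proper 2-colouring `c` of `G` yields the invariant `(u, i, w) ↦ c u + i + c w (mod 2)`, which is
constant along the edges of `H` and extends by `s* ↦ 0`, `t* ↦ 1`; so `s*` and `t*` are then
separated. Conversely, a graph that is not 2-colourable has an odd closed walk at some `w`, and
its lift to the `w`-th copy of the double cover runs from `(w, 0, w)` to `(w, 1, w)`, joining
`s*` to `t*`.
-/

namespace SimpleGraph

lemma eq_of_reachable_fromRel {α β : Type*} {r : α → α → Prop} (f : α → β)
    (hf : ∀ x y, r x y → f x = f y) {x y : α} (h : (fromRel r).Reachable x y) : f x = f y := by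
  obtain ⟨p⟩ := h
  induction p with
  | nil => rfl
  | cons hadj _ ih =>
    rcases ((fromRel_adj r _ _).mp hadj).2 with hr | hr
    · exact (hf _ _ hr).trans ih
    · exact (hf _ _ hr).symm.trans ih

variable {V : Type} (G : SimpleGraph V)

/-- The graph `H`, with `s* = Sum.inr false` and `t* = Sum.inr true`. -/
def oddCycleGadget : SimpleGraph ((V × Bool × V) ⊕ Bool) :=
  fromRel (fun x y : (V × Bool × V) ⊕ Bool =>
    (∃ (u v : V) (i j : Bool) (w : V), G.Adj u v ∧ i ≠ j ∧
        x = Sum.inl (u, i, w) ∧ y = Sum.inl (v, j, w)) ∨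
    (∃ w : V, x = Sum.inr false ∧ y = Sum.inl (w, false, w)) ∨
    (∃ w : V, x = Sum.inr true ∧ y = Sum.inl (w, true, w)))

variable {G}

lemma oddCycleGadget_adj_inl {u v : V} (h : G.Adj u v) {i j : Bool} (hij : i ≠ j) (w : V) :
    (oddCycleGadget G).Adj (Sum.inl (u, i, w)) (Sum.inl (v, j, w)) := by
  refine (fromRel_adj _ _ _).mpr ⟨?_, .inl (.inl ⟨u, v, i, j, w, h, hij, rfl, rfl⟩)⟩
  simp [G.ne_of_adj h]

lemma oddCycleGadget_adj_inr (b : Bool) (w : V) :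
    (oddCycleGadget G).Adj (Sum.inr b) (Sum.inl (w, b, w)) := by
  refine (fromRel_adj _ _ _).mpr ⟨Sum.inr_ne_inl, .inl (.inr ?_)⟩
  cases b
  · exact .inl ⟨w, rfl, rfl⟩
  · exact .inr ⟨w, rfl, rfl⟩

lemma oddCycleGadget_reachable_of_walk {u v : V} (p : G.Walk u v) (i : Bool) (w : V) :
    (oddCycleGadget G).Reachable (Sum.inl (u, i, w))
      (Sum.inl (v, i ^^ decide (Odd p.length), w)) := by
  induction p generalizing i with
  | nil => simp
  | cons h q ih =>
    refine (oddCycleGadget_adj_inl h (Bool.not_ne_self i).symm w).reachable.trans ?_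
    convert ih (!i) using 4
    simp only [Walk.length_cons, Nat.odd_add_one, decide_not, Bool.xor_not, Bool.not_xor]

lemma oddCycleGadget_reachable_of_odd_loop {w : V} (p : G.Walk w w) (hp : Odd p.length) :
    (oddCycleGadget G).Reachable (Sum.inr false) (Sum.inr true) := by
  have hlift := oddCycleGadget_reachable_of_walk p false w
  rw [decide_eq_true hp, Bool.false_xor] at hlift
  exact (oddCycleGadget_adj_inr false w).reachable.trans
    (hlift.trans (oddCycleGadget_adj_inr true w).reachable.symm)

lemma oddCycleGadget_not_reachable_of_coloring (C : G.Coloring Bool) :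
    ¬ (oddCycleGadget G).Reachable (Sum.inr false) (Sum.inr true) := by
  intro h
  let f : (V × Bool × V) ⊕ Bool → Bool := Sum.elim (fun x => C x.1 ^^ x.2.1 ^^ C x.2.2) id
  refine Bool.false_ne_true (eq_of_reachable_fromRel f ?_ h)
  rintro _ _ (⟨u, v, i, j, w, huv, hij, rfl, rfl⟩ | ⟨w, rfl, rfl⟩ | ⟨w, rfl, rfl⟩)
  · have xor_eq_of_ne_of_ne : ∀ a b i j d : Bool, a ≠ b → i ≠ j → (a ^^ i ^^ d) = (b ^^ j ^^ d) := by
      decide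
    exact xor_eq_of_ne_of_ne _ _ _ _ _ (C.valid huv) hij
  all_goals simp [f]

end SimpleGraph

theorem stmt_2_general {V : Type} (G : SimpleGraph V) :
    (SimpleGraph.fromRel (fun x y : (V × Bool × V) ⊕ Bool =>
      (∃ (u v : V) (i j : Bool) (w : V), G.Adj u v ∧ i ≠ j ∧
          x = Sum.inl (u, i, w) ∧ y = Sum.inl (v, j, w)) ∨
      (∃ w : V, x = Sum.inr false ∧ y = Sum.inl (w, false, w)) ∨
      (∃ w : V, x = Sum.inr true ∧ y = Sum.inl (w, true, w)))).Reachable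
      (Sum.inr false) (Sum.inr true) ↔
      ¬ G.Colorable 2 := by
  change G.oddCycleGadget.Reachable _ _ ↔ _
  refine ⟨fun hst ⟨C⟩ => SimpleGraph.oddCycleGadget_not_reachable_of_coloring
    (G.recolorOfEquiv finTwoEquiv C) hst, fun hG => ?_⟩
  obtain ⟨w, p, hp⟩ : ∃ w, ∃ p : G.Walk w w, Odd p.length := by
    simpa [SimpleGraph.two_colorable_iff_forall_loop_even] using hG
  exact SimpleGraph.oddCycleGadget_reachable_of_odd_loop p hp

/-- Let `G` be a finite simple graph on `V`. The graph `H` on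
`(V × Bool × V) ⊕ Bool` (where `Sum.inr false` is `s*` and `Sum.inr true` is `t*`), whose
edges are: `(u,i,w) ~ (v,j,w)` iff `G.Adj u v ∧ i ≠ j` (a copy of the bipartite double
cover of `G` for each `w`), together with `s* ~ (w,0,w)` and `t* ~ (w,1,w)` for each `w`.
Then `s*` and `t*` are connected in `H` iff `G` is not 2-colorable. -/
theorem stmt_2 {V : Type} [Fintype V] (G : SimpleGraph V) :
    (SimpleGraph.fromRel (fun x y : (V × Bool × V) ⊕ Bool =>
      (∃ (u v : V) (i j : Bool) (w : V), G.Adj u v ∧ i ≠ j ∧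
          x = Sum.inl (u, i, w) ∧ y = Sum.inl (v, j, w)) ∨
      (∃ w : V, x = Sum.inr false ∧ y = Sum.inl (w, false, w)) ∨
      (∃ w : V, x = Sum.inr true ∧ y = Sum.inl (w, true, w)))).Reachable
      (Sum.inr false) (Sum.inr true) ↔
      ¬ G.Colorable 2 :=
  stmt_2_general G
end

section
/- Let V be a finite set with |V| = n ≥ 1, let R ⊆ V × V be a directed graph on V, and let s, t ∈ V. Define the simple (undirected) layered graph G' on vertex set V × {0,1,…,n−1} in which two vertices are adjacent if and only if, writing them as (x,i) and (y,i+1) with consecutive layer indices, either x = y or (x,y) ∈ R. Then t is reachable from s in the directed graph R (i.e., (s,t) is in the reflexive-transitive closure of R) if and only if G' contains a walk of length exactly n − 1 from (s,0) to (t,n−1). -/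
/-!
A walk from layer `0` to layer `n - 1` of length `n - 1` has to climb one layer at every step,
so its first coordinates form an `R`-path in which some steps may stay in place. Conversely, an
`R`-path can be shortened to one without repeated vertices, hence with at most `n - 1` edges, and
then padded with vertical edges `(x, i) — (x, i + 1)` to length exactly `n - 1`.
-/

open Relation List

theorem Relation.ReflTransGen.exists_isChain_cons_nodup {α : Type*} {r : α → α → Prop} {a b : α}
    (h : ReflTransGen r a b) :
    ∃ l, IsChain r (a :: l) ∧ (a :: l).Nodup ∧ (a :: l).getLast (cons_ne_nil a l) = b := by
  induction h using Relation.ReflTransGen.head_induction_on with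
  | refl => exact ⟨[], .singleton _, nodup_singleton _, rfl⟩
  | @head a c hac _ ih =>
    obtain ⟨l, hchain, hnodup, hlast⟩ := ih
    by_cases ha : a ∈ c :: l
    · obtain ⟨l₁, l₂, hsplit⟩ := append_of_mem ha
      rw [hsplit] at hchain hnodup
      exact ⟨l₂, hchain.right_of_append, hnodup.sublist (sublist_append_right _ _),
        by rw [← hlast]; simp [hsplit]⟩
    · exact ⟨c :: l, hchain.cons_cons hac, nodup_cons.2 ⟨ha, hnodup⟩, by rwa [getLast_cons_cons]⟩

section Layered

variable {V : Type*}

abbrev layeredGraph (R : V → V → Prop) (n : ℕ) : SimpleGraph (V × Fin n) :=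
  SimpleGraph.fromRel fun x y => (x.2 : ℕ) + 1 = y.2 ∧ (x.1 = y.1 ∨ R x.1 y.1)

namespace layeredGraph

variable {R : V → V → Prop} {n : ℕ}

theorem adj_iff {x y : V × Fin n} :
    (layeredGraph R n).Adj x y ↔
      (x.2 : ℕ) + 1 = y.2 ∧ ReflGen R x.1 y.1 ∨ (y.2 : ℕ) + 1 = x.2 ∧ ReflGen R y.1 x.1 := by
  simp only [SimpleGraph.fromRel_adj, reflGen_iff, eq_comm (a := y.1), ne_eq, and_iff_right_iff_imp]
  rintro (⟨h, -⟩ | ⟨h, -⟩) rfl <;> omega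

theorem layer_le_add_length {a b : V × Fin n} (p : (layeredGraph R n).Walk a b) :
    (b.2 : ℕ) ≤ a.2 + p.length := by
  induction p with
  | nil => simp
  | cons h _ ih =>
    rw [SimpleGraph.Walk.length_cons]
    rcases adj_iff.1 h with ⟨h, -⟩ | ⟨h, -⟩ <;> omega

theorem reflTransGen_of_length_eq {a b : V × Fin n} (p : (layeredGraph R n).Walk a b)
    (hp : (b.2 : ℕ) = a.2 + p.length) : ReflTransGen R a.1 b.1 := by
  induction p with
  | nil => rfl
  | cons h q ih =>
    rw [SimpleGraph.Walk.length_cons] at hp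
    rcases adj_iff.1 h with ⟨hstep, hR⟩ | ⟨hstep, -⟩
    · exact hR.to_reflTransGen.trans (ih (by omega))
    · have := layer_le_add_length q
      omega

theorem exists_walk_of_isChain {x y : V} {l : List V} (hl : IsChain (ReflGen R) (x :: l))
    (hy : (x :: l).getLast (cons_ne_nil x l) = y) {i j : Fin n} (hij : (i : ℕ) + l.length ≤ j) :
    ∃ p : (layeredGraph R n).Walk (x, i) (y, j), p.length = j - i := by
  induction hd : (j : ℕ) - i generalizing x l i with
  | zero =>
    obtain rfl : l = [] := eq_nil_of_length_eq_zero (by omega)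
    obtain rfl : i = j := Fin.ext (by omega)
    exact ⟨.copy .nil rfl (by rw [← hy]; rfl), by simp⟩
  | succ d ih =>
    let i' : Fin n := ⟨i + 1, by omega⟩
    have hi' : (i' : ℕ) = i + 1 := rfl
    cases l with
    | nil =>
      obtain ⟨p, hp⟩ := ih hl hy (i := i') (by simp only [length_nil]; omega) (by omega)
      have h : (layeredGraph R n).Adj (x, i) (x, i') := adj_iff.2 (.inl ⟨rfl, .refl⟩)
      exact ⟨.cons h p, by rw [SimpleGraph.Walk.length_cons, hp]⟩
    | cons z l =>
      rw [isChain_cons_cons] at hl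
      obtain ⟨p, hp⟩ := ih hl.2 (by rwa [getLast_cons_cons] at hy) (i := i')
        (by simp only [length_cons] at hij; omega) (by omega)
      have h : (layeredGraph R n).Adj (x, i) (z, i') := adj_iff.2 (.inl ⟨rfl, hl.1⟩)
      exact ⟨.cons h p, by rw [SimpleGraph.Walk.length_cons, hp]⟩

end layeredGraph

end Layered

/-- Let `V` be a finite set with `|V| = n ≥ 1`, `R` a directed graph (binary
relation) on `V`, and `s t : V`. In the undirected layered graph on `V × Fin n`, where
`(x,i)` is adjacent to `(y,i+1)` iff `x = y` or `R x y`, there is a walk of length exactly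
`n - 1` from `(s,0)` to `(t,n-1)` iff `t` is reachable from `s` in `R` (i.e. `(s,t)` is in
the reflexive-transitive closure of `R`). -/
theorem stmt_3 {V : Type} [Fintype V] (n : ℕ) (hn : 1 ≤ n)
    (hcard : Fintype.card V = n) (R : V → V → Prop) (s t : V) :
    Relation.ReflTransGen R s t ↔
      ∃ p : (SimpleGraph.fromRel (fun x y : V × Fin n =>
            (x.2 : ℕ) + 1 = (y.2 : ℕ) ∧ (x.1 = y.1 ∨ R x.1 y.1))).Walk
          (s, ⟨0, by omega⟩) (t, ⟨n - 1, by omega⟩),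
        p.length = n - 1 := by
  constructor
  · intro h
    obtain ⟨l, hchain, hnodup, hlast⟩ :=
      (reflTransGen_reflGen (r := R) ▸ h).exists_isChain_cons_nodup
    have hlen : l.length + 1 ≤ n := hcard ▸ hnodup.length_le_card
    exact layeredGraph.exists_walk_of_isChain hchain hlast (by simp; omega)
  · rintro ⟨p, hp⟩
    exact layeredGraph.reflTransGen_of_length_eq p (by simp [hp])
end

section
/- Let G be a connected finite simple graph on n vertices, and let s, t be vertices of G. Let G' be the simple graph obtained from G by attaching two new paths of 2n new vertices each: new vertices p_1, …, p_{2n} with edges {s,p_1} and {p_i,p_{i+1}} for 1 ≤ i ≤ 2n−1, and new vertices q_1, …, q_{2n} with edges {t,q_1} and {q_i,q_{i+1}} for 1 ≤ i ≤ 2n−1. Then G' is connected and diam(G') = 4n + dist_G(s,t). -/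
/-!
Every vertex of the enlarged graph lies at depth at most `2n` on a chain hanging from a vertex
of `G`, and that vertex is `s` or `t` unless the depth is zero. Going up, across a geodesic of
`G` (of length `< n`) and down again bounds every distance by `4n + dist s t`. Conversely, the
potential measuring progress from the far end of the `s`-chain to the far end of the `t`-chain
changes by at most one along an edge, and differs by exactly `4n + dist s t` between those ends.
-/


/-- The eccentricity of a vertex `u` in a finite simple graph: the maximum of the
distances from `u` to the other vertices. -/
noncomputable def gecc {α : Type} [Fintype α] (H : SimpleGraph α) (u : α) : ℕ :=
  Finset.univ.sup fun v => H.dist u v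

/-- The diameter of a finite simple graph: the maximum distance between two vertices. -/
noncomputable def gdiam {α : Type} [Fintype α] (H : SimpleGraph α) : ℕ :=
  Finset.univ.sup fun p : α × α => H.dist p.1 p.2

/-- The graph `G'` obtained from `G` by attaching two new paths (chains) of `2n` new
vertices each: `p_1, …, p_{2n}` (the vertices `Sum.inr (Sum.inl i)`, `p_i` having index
`i - 1`) with edges `{s,p_1}` and `{p_i, p_{i+1}}`, and `q_1, …, q_{2n}` (the vertices
`Sum.inr (Sum.inr i)`) with edges `{t,q_1}` and `{q_i, q_{i+1}}`. -/
def attachChains {V : Type} (G : SimpleGraph V) (s t : V) (n : ℕ) :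
    SimpleGraph (V ⊕ (Fin (2 * n) ⊕ Fin (2 * n))) :=
  SimpleGraph.fromRel fun x y =>
    (∃ u v : V, G.Adj u v ∧ x = Sum.inl u ∧ y = Sum.inl v) ∨
    (∃ h : 0 < 2 * n, x = Sum.inl s ∧ y = Sum.inr (Sum.inl ⟨0, h⟩)) ∨
    (∃ i j : Fin (2 * n), (i : ℕ) + 1 = (j : ℕ) ∧
      x = Sum.inr (Sum.inl i) ∧ y = Sum.inr (Sum.inl j)) ∨
    (∃ h : 0 < 2 * n, x = Sum.inl t ∧ y = Sum.inr (Sum.inr ⟨0, h⟩)) ∨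
    (∃ i j : Fin (2 * n), (i : ℕ) + 1 = (j : ℕ) ∧
      x = Sum.inr (Sum.inr i) ∧ y = Sum.inr (Sum.inr j))

namespace SimpleGraph

variable {V : Type*} {G : SimpleGraph V} {u v : V}

lemma Reachable.dist_lt_card [Fintype V] (h : G.Reachable u v) : G.dist u v < Fintype.card V := by
  obtain ⟨p, hp, hlen⟩ := h.exists_path_of_dist
  exact hlen ▸ hp.length_lt

lemma Walk.abs_sub_le_length {φ : V → ℤ} (hφ : ∀ ⦃x y⦄, G.Adj x y → |φ x - φ y| ≤ 1)
    (w : G.Walk u v) : |φ u - φ v| ≤ w.length := by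
  induction w with
  | nil => simp
  | @cons a b c hab _ ih =>
    calc |φ a - φ c| ≤ |φ a - φ b| + |φ b - φ c| := abs_sub_le _ _ _
      _ ≤ 1 + _ := add_le_add (hφ hab) ih
      _ = _ := by push_cast [Walk.length_cons]; ring

lemma Reachable.abs_sub_le_dist {φ : V → ℤ} (hφ : ∀ ⦃x y⦄, G.Adj x y → |φ x - φ y| ≤ 1)
    (h : G.Reachable u v) : |φ u - φ v| ≤ G.dist u v := by
  obtain ⟨p, hp⟩ := h.exists_walk_length_eq_dist
  exact hp ▸ p.abs_sub_le_length hφ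

lemma exists_walk_length_eq_succ_of_chain {m : ℕ} (r : V) (f : Fin m → V)
    (h0 : ∀ h : 0 < m, G.Adj r (f ⟨0, h⟩))
    (hsucc : ∀ i j : Fin m, (i : ℕ) + 1 = j → G.Adj (f i) (f j)) (i : Fin m) :
    ∃ w : G.Walk r (f i), w.length = i + 1 := by
  obtain ⟨i, hi⟩ := i
  induction i with
  | zero => exact ⟨(h0 hi).toWalk, rfl⟩
  | succ k ih =>
    obtain ⟨w, hw⟩ := ih (by omega)
    exact ⟨w.concat (hsucc ⟨k, by omega⟩ ⟨k + 1, hi⟩ rfl), by simp [hw]⟩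

end SimpleGraph

open SimpleGraph

section attachChains

variable {V : Type} {G : SimpleGraph V} {s t : V} {n : ℕ}

def attachChainsInl : G →g attachChains G s t n where
  toFun := Sum.inl
  map_rel' h := (fromRel_adj _ _ _).mpr ⟨by simp [h.ne], .inl (.inl ⟨_, _, h, rfl, rfl⟩)⟩

lemma attachChains_adj_left_zero (h : 0 < 2 * n) :
    (attachChains G s t n).Adj (.inl s) (.inr (.inl ⟨0, h⟩)) :=
  (fromRel_adj _ _ _).mpr ⟨by simp, .inl (.inr (.inl ⟨h, rfl, rfl⟩))⟩

lemma attachChains_adj_left_succ {i j : Fin (2 * n)} (hij : (i : ℕ) + 1 = j) :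
    (attachChains G s t n).Adj (.inr (.inl i)) (.inr (.inl j)) :=
  (fromRel_adj _ _ _).mpr ⟨by simp [Fin.ext_iff]; omega,
    .inl (.inr (.inr (.inl ⟨i, j, hij, rfl, rfl⟩)))⟩

lemma attachChains_adj_right_zero (h : 0 < 2 * n) :
    (attachChains G s t n).Adj (.inl t) (.inr (.inr ⟨0, h⟩)) :=
  (fromRel_adj _ _ _).mpr ⟨by simp, .inl (.inr (.inr (.inr (.inl ⟨h, rfl, rfl⟩))))⟩

lemma attachChains_adj_right_succ {i j : Fin (2 * n)} (hij : (i : ℕ) + 1 = j) :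
    (attachChains G s t n).Adj (.inr (.inr i)) (.inr (.inr j)) :=
  (fromRel_adj _ _ _).mpr ⟨by simp [Fin.ext_iff]; omega,
    .inl (.inr (.inr (.inr (.inr ⟨i, j, hij, rfl, rfl⟩))))⟩

def chainRoot (s t : V) {m : ℕ} : V ⊕ (Fin m ⊕ Fin m) → V
  | .inl u => u
  | .inr (.inl _) => s
  | .inr (.inr _) => t

def chainDepth {m : ℕ} : V ⊕ (Fin m ⊕ Fin m) → ℕ
  | .inl _ => 0
  | .inr (.inl i) => i + 1
  | .inr (.inr i) => i + 1

lemma attachChains_exists_walk_chainRoot (x : V ⊕ (Fin (2 * n) ⊕ Fin (2 * n))) :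
    ∃ w : (attachChains G s t n).Walk (.inl (chainRoot s t x)) x, w.length = chainDepth x := by
  rcases x with u | i | i
  · exact ⟨.nil, rfl⟩
  · exact exists_walk_length_eq_succ_of_chain _ (Sum.inr ∘ Sum.inl) attachChains_adj_left_zero
      (fun _ _ => attachChains_adj_left_succ) i
  · exact exists_walk_length_eq_succ_of_chain _ (Sum.inr ∘ Sum.inr) attachChains_adj_right_zero
      (fun _ _ => attachChains_adj_right_succ) i

lemma attachChains_dist_le (hconn : G.Connected) (x y : V ⊕ (Fin (2 * n) ⊕ Fin (2 * n))) :
    (attachChains G s t n).dist x y ≤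
      chainDepth x + G.dist (chainRoot s t x) (chainRoot s t y) + chainDepth y := by
  obtain ⟨wx, hx⟩ := attachChains_exists_walk_chainRoot (G := G) (s := s) (t := t) x
  obtain ⟨wy, hy⟩ := attachChains_exists_walk_chainRoot (G := G) (s := s) (t := t) y
  obtain ⟨p, hp⟩ := hconn.exists_walk_length_eq_dist (chainRoot s t x) (chainRoot s t y)
  let q : (attachChains G s t n).Walk (.inl (chainRoot s t x)) (.inl (chainRoot s t y)) :=
    p.map attachChainsInl
  have hq : q.length = p.length := p.length_map _
  calc _ ≤ (wx.reverse.append (q.append wy)).length := dist_le _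
    _ = _ := by simp only [Walk.length_append, Walk.length_reverse, hx, hy, hq, hp, add_assoc]

lemma attachChains_connected (hconn : G.Connected) : (attachChains G s t n).Connected := by
  refine (connected_iff _).mpr ⟨fun x y => ?_, ⟨.inl s⟩⟩
  obtain ⟨wx, -⟩ := attachChains_exists_walk_chainRoot (G := G) (s := s) (t := t) x
  obtain ⟨wy, -⟩ := attachChains_exists_walk_chainRoot (G := G) (s := s) (t := t) y
  exact wx.reverse.reachable.trans (((hconn _ _).map attachChainsInl).trans wy.reachable)

lemma chainDepth_add_dist_chainRoot_add_chainDepth_le (hdist : ∀ u v, G.dist u v < n)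
    (x y : V ⊕ (Fin (2 * n) ⊕ Fin (2 * n))) :
    chainDepth x + G.dist (chainRoot s t x) (chainRoot s t y) + chainDepth y ≤
      4 * n + G.dist s t := by
  have hts : G.dist t s = G.dist s t := dist_comm
  rcases x with u | i | i <;> rcases y with v | j | j <;>
    simp only [chainRoot, chainDepth, dist_self] <;> grind

/-- `0` at the far end of the `s`-chain, `2n` at `s`, `4n + dist s t` at the far end of the
`t`-chain. -/
noncomputable def chainPotential (G : SimpleGraph V) (s t : V) (n : ℕ) :
    V ⊕ (Fin (2 * n) ⊕ Fin (2 * n)) → ℤ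
  | .inl u => 2 * n + G.dist s u
  | .inr (.inl i) => 2 * n - 1 - i
  | .inr (.inr j) => 2 * n + G.dist s t + 1 + j

lemma abs_chainPotential_sub_le_one {x y : V ⊕ (Fin (2 * n) ⊕ Fin (2 * n))}
    (h : (attachChains G s t n).Adj x y) :
    |chainPotential G s t n x - chainPotential G s t n y| ≤ 1 := by
  rw [attachChains, fromRel_adj] at h
  rw [abs_le]
  rcases h.2 with (⟨u, v, huv, rfl, rfl⟩ | ⟨-, rfl, rfl⟩ | ⟨i, j, hij, rfl, rfl⟩ |
      ⟨-, rfl, rfl⟩ | ⟨i, j, hij, rfl, rfl⟩) | (⟨u, v, huv, rfl, rfl⟩ | ⟨-, rfl, rfl⟩ |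
      ⟨i, j, hij, rfl, rfl⟩ | ⟨-, rfl, rfl⟩ | ⟨i, j, hij, rfl, rfl⟩) <;>
    simp only [chainPotential, dist_self] <;> grind [Adj.diff_dist_adj]

lemma le_attachChains_dist_left_right (hconn : G.Connected) (i j : Fin (2 * n)) :
    (i + 1) + G.dist s t + (j + 1) ≤
      (attachChains G s t n).dist (.inr (.inl i)) (.inr (.inr j)) := by
  have h : |chainPotential G s t n (.inr (.inl i)) - chainPotential G s t n (.inr (.inr j))| ≤
      (attachChains G s t n).dist (.inr (.inl i)) (.inr (.inr j)) :=
    ((attachChains_connected hconn).preconnected _ _).abs_sub_le_dist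
      fun _ _ h => abs_chainPotential_sub_le_one h
  simp only [chainPotential, abs_le] at h
  omega

end attachChains

/-- if `G` is a connected finite simple graph on `n` vertices and `s t` are
vertices of `G`, then the graph `G'` obtained by attaching chains of `2n` new vertices to
`s` and to `t` is connected and has diameter `4n + dist_G(s,t)`. -/
theorem stmt_5 {V : Type} [Fintype V] (n : ℕ) (hcard : Fintype.card V = n)
    (G : SimpleGraph V) (hconn : G.Connected) (s t : V) :
    (attachChains G s t n).Connected ∧
      gdiam (attachChains G s t n) = 4 * n + G.dist s t := by
  have hn : 0 < n := hcard ▸ Fintype.card_pos_iff.mpr hconn.nonempty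
  have hdist (u v : V) : G.dist u v < n := hcard ▸ (hconn u v).dist_lt_card
  refine ⟨attachChains_connected hconn, le_antisymm (Finset.sup_le fun p _ => ?_) ?_⟩
  · exact (attachChains_dist_le hconn p.1 p.2).trans
      (chainDepth_add_dist_chainRoot_add_chainDepth_le hdist p.1 p.2)
  · let last : Fin (2 * n) := ⟨2 * n - 1, by omega⟩
    calc 4 * n + G.dist s t = (last + 1) + G.dist s t + (last + 1) := by simp only [last]; omega
      _ ≤ (attachChains G s t n).dist (.inr (.inl last)) (.inr (.inr last)) :=
        le_attachChains_dist_left_right hconn last last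
      _ ≤ _ := Finset.le_sup (f := fun p => (attachChains G s t n).dist p.1 p.2)
        (Finset.mem_univ (.inr (.inl last), .inr (.inr last)))
end

section
/- Let H be a connected finite simple graph and let a ≠ b be vertices of H satisfying ecc_H(a) = ecc_H(b) = dist_H(a,b) = diam(H). Let K be the simple graph obtained from two disjoint copies H₁ and H₂ of H by identifying the copy of b in H₁ with the copy of a in H₂, and call the identified vertex c. Then K is connected, ecc_K(c) = diam(H), every vertex x ≠ c of K satisfies ecc_K(x) > diam(H), and consequently radius(K) = diam(H) and c is the unique vertex of K of minimum eccentricity (the unique center of K). -/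
/-- The radius of a finite simple graph: the minimum eccentricity of a vertex. -/
noncomputable def gradius {α : Type} [Fintype α] (H : SimpleGraph α) : ℕ :=
  ⨅ u, gecc H u

/-- The graph obtained from two disjoint copies of `H` by identifying the vertex `b` of the
first copy with the vertex `a` of the second copy.  The first copy is `Sum.inl`, the second
copy is `Sum.inr` (omitting `a`, which is identified with `Sum.inl b`); the identified
vertex `c` is `Sum.inl b`. -/
def glueGraph {α : Type} [DecidableEq α] (H : SimpleGraph α) (b a : α) :
    SimpleGraph (α ⊕ {x : α // x ≠ a}) :=
  SimpleGraph.fromRel fun x y =>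
    (∃ u v : α, H.Adj u v ∧ x = Sum.inl u ∧ y = Sum.inl v) ∨
    (∃ u v : {x : α // x ≠ a}, H.Adj u.1 v.1 ∧ x = Sum.inr u ∧ y = Sum.inr v) ∨
    (∃ v : {x : α // x ≠ a}, H.Adj a v.1 ∧ x = Sum.inl b ∧ y = Sum.inr v)

/-!
Distances in the glued graph are computed exactly: within a copy they are the distances of `H`,
and between the copies they are `dist u b + dist a v`, since every path crosses the glued vertex.
Hence the glued vertex has eccentricity `max (ecc b) (ecc a) = diam H`, whereas a vertex `u ≠ c`
of one copy is at distance `dist u c + diam H > diam H` from a vertex of the other copy realising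
the eccentricity of `a` (resp. `b`).
-/

lemma SimpleGraph.Reachable.dist_map_le {V W : Type*} {G : SimpleGraph V} {G' : SimpleGraph W}
    {u v : V} (h : G.Reachable u v) (f : G →g G') : G'.dist (f u) (f v) ≤ G.dist u v := by
  obtain ⟨p, hp⟩ := h.exists_walk_length_eq_dist
  calc G'.dist (f u) (f v) ≤ (p.map f).length := SimpleGraph.dist_le _
    _ = G.dist u v := by rw [SimpleGraph.Walk.length_map, hp]

section Eccentricity

variable {β : Type} [Fintype β] {G : SimpleGraph β}

lemma dist_le_gecc (u v : β) : G.dist u v ≤ gecc G u :=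
  Finset.le_sup (Finset.mem_univ v)

lemma gecc_le_iff {u : β} {k : ℕ} : gecc G u ≤ k ↔ ∀ v, G.dist u v ≤ k := by
  simp [gecc]

lemma exists_dist_eq_gecc [Nonempty β] (u : β) : ∃ v, G.dist u v = gecc G u := by
  obtain ⟨v, -, hv⟩ := Finset.univ.exists_mem_eq_sup Finset.univ_nonempty (G.dist u)
  exact ⟨v, hv.symm⟩

lemma gradius_eq_gecc_of_forall_lt {c : β} (h : ∀ x ≠ c, gecc G c < gecc G x) :
    gradius G = gecc G c := by
  have : Nonempty β := ⟨c⟩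
  refine le_antisymm (ciInf_le' _ c) (le_ciInf fun x => ?_)
  rcases eq_or_ne x c with rfl | hx
  · exact le_rfl
  · exact (h x hx).le

end Eccentricity

namespace glueGraph

variable {α : Type} {H : SimpleGraph α} {b a : α}

variable (H b a) in
noncomputable def gluedDist : α ⊕ {x : α // x ≠ a} → α ⊕ {x : α // x ≠ a} → ℕ
  | .inl u, .inl v => H.dist u v
  | .inl u, .inr v => H.dist u b + H.dist a v
  | .inr u, .inl v => H.dist a u + H.dist v b
  | .inr u, .inr v => H.dist u v

lemma gluedDist_triangle (hconn : H.Connected) (x y z : α ⊕ {x : α // x ≠ a}) :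
    gluedDist H b a x z ≤ gluedDist H b a x y + gluedDist H b a y z := by
  have T (u v w : α) : H.dist u w ≤ H.dist u v + H.dist v w := hconn.dist_triangle
  have C (u v : α) : H.dist u v = H.dist v u := SimpleGraph.dist_comm
  rcases x with u | u <;> rcases y with v | v <;> rcases z with w | w <;> simp only [gluedDist]
  · exact T u v w
  · have := T u v b; omega
  · have := T u b w; have := C b w; omega
  · have := T a v w; omega
  · have := T w v b; have := C w v; omega
  · have := T u a w; have := C a u; omega
  · have := T a v u; have := C u v; omega
  · exact T u v w

variable [DecidableEq α]

@[simp] lemma adj_inl_inl {u v : α} : (glueGraph H b a).Adj (.inl u) (.inl v) ↔ H.Adj u v := by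
  simp only [glueGraph, SimpleGraph.fromRel_adj]
  aesop (add safe forward SimpleGraph.Adj.ne, safe forward SimpleGraph.Adj.symm)

@[simp] lemma adj_inr_inr {u v : {x : α // x ≠ a}} :
    (glueGraph H b a).Adj (.inr u) (.inr v) ↔ H.Adj u v := by
  simp only [glueGraph, SimpleGraph.fromRel_adj]
  aesop (add safe forward SimpleGraph.Adj.ne, safe forward SimpleGraph.Adj.symm)

@[simp] lemma adj_inl_inr {u : α} {v : {x : α // x ≠ a}} :
    (glueGraph H b a).Adj (.inl u) (.inr v) ↔ u = b ∧ H.Adj a v := by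
  simp only [glueGraph, SimpleGraph.fromRel_adj]
  aesop

variable (H b a) in
def inlHom : H →g glueGraph H b a where
  toFun := Sum.inl
  map_rel' := adj_inl_inl.2

variable (b a) in
def secondCopy (u : α) : α ⊕ {x : α // x ≠ a} :=
  if h : u = a then .inl b else .inr ⟨u, h⟩

@[simp] lemma secondCopy_self : secondCopy b a a = .inl b := dif_pos rfl

@[simp] lemma secondCopy_val (v : {x : α // x ≠ a}) : secondCopy b a v = .inr v :=
  dif_neg v.2

variable (H b a) in
@[simps]
def secondCopyHom : H →g glueGraph H b a where
  toFun := secondCopy b a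
  map_rel' {u v} h := by
    by_cases hu : u = a
    · subst hu
      have hv : v ≠ u := h.ne.symm
      simpa [secondCopy, hv] using h
    by_cases hv : v = a
    · subst hv
      rw [SimpleGraph.adj_comm]
      simpa [secondCopy, hu] using h.symm
    · simpa [secondCopy, hu, hv] using h

lemma reachable_inl_gluing (hconn : H.Connected) :
    ∀ x, (glueGraph H b a).Reachable (.inl b) x
  | .inl u => (hconn b u).map (inlHom H b a)
  | .inr v => by simpa using (hconn a v).map (secondCopyHom H b a)

theorem connected (hconn : H.Connected) : (glueGraph H b a).Connected :=
  (SimpleGraph.connected_iff _).2 ⟨fun x y =>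
    (reachable_inl_gluing hconn x).symm.trans (reachable_inl_gluing hconn y), ⟨.inl b⟩⟩

lemma gluedDist_le_one_of_adj {x y : α ⊕ {x : α // x ≠ a}} (h : (glueGraph H b a).Adj x y) :
    gluedDist H b a x y ≤ 1 := by
  have hH {u v : α} (huv : H.Adj u v) : H.dist u v ≤ 1 :=
    (SimpleGraph.dist_eq_one_iff_adj.2 huv).le
  rcases x with u | u <;> rcases y with v | v
  · exact hH (adj_inl_inl.1 h)
  · obtain ⟨rfl, hav⟩ := adj_inl_inr.1 h
    simpa [gluedDist] using hH hav
  · obtain ⟨rfl, hau⟩ := adj_inl_inr.1 h.symm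
    simpa [gluedDist] using hH hau
  · exact hH (adj_inr_inr.1 h)

lemma gluedDist_le_length (hconn : H.Connected) {x y : α ⊕ {x : α // x ≠ a}}
    (p : (glueGraph H b a).Walk x y) : gluedDist H b a x y ≤ p.length := by
  induction p with
  | @nil x => cases x <;> simp [gluedDist]
  | @cons x y z h p ih =>
    calc gluedDist H b a x z ≤ gluedDist H b a x y + gluedDist H b a y z :=
          gluedDist_triangle hconn x y z
      _ ≤ 1 + p.length := add_le_add (gluedDist_le_one_of_adj h) ih
      _ = (p.cons h).length := by rw [SimpleGraph.Walk.length_cons, add_comm]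

lemma dist_inl_gluing_inr_le (hconn : H.Connected) (v : {x : α // x ≠ a}) :
    (glueGraph H b a).dist (.inl b) (.inr v) ≤ H.dist a v := by
  simpa using (hconn a v).dist_map_le (secondCopyHom H b a)

lemma dist_le_gluedDist (hconn : H.Connected) :
    ∀ x y, (glueGraph H b a).dist x y ≤ gluedDist H b a x y
  | .inl u, .inl v => (hconn u v).dist_map_le (inlHom H b a)
  | .inr u, .inr v => by simpa [gluedDist] using (hconn u v).dist_map_le (secondCopyHom H b a)
  | .inl u, .inr v =>
    calc (glueGraph H b a).dist (.inl u) (.inr v)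
        ≤ (glueGraph H b a).dist (.inl u) (.inl b) + (glueGraph H b a).dist (.inl b) (.inr v) :=
          (connected hconn).dist_triangle
      _ ≤ H.dist u b + H.dist a v :=
          add_le_add ((hconn u b).dist_map_le (inlHom H b a)) (dist_inl_gluing_inr_le hconn v)
  | .inr u, .inl v =>
    calc (glueGraph H b a).dist (.inr u) (.inl v)
        ≤ (glueGraph H b a).dist (.inr u) (.inl b) + (glueGraph H b a).dist (.inl b) (.inl v) :=
          (connected hconn).dist_triangle
      _ ≤ H.dist a u + H.dist v b := by
          rw [SimpleGraph.dist_comm, SimpleGraph.dist_comm (v := b)]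
          exact add_le_add (dist_inl_gluing_inr_le hconn u) ((hconn b v).dist_map_le (inlHom H b a))

theorem dist_eq_gluedDist (hconn : H.Connected) (x y : α ⊕ {x : α // x ≠ a}) :
    (glueGraph H b a).dist x y = gluedDist H b a x y := by
  obtain ⟨p, hp⟩ := (connected hconn).exists_walk_length_eq_dist x y
  exact (dist_le_gluedDist hconn x y).antisymm (hp ▸ gluedDist_le_length hconn p)

lemma dist_inl_inl (hconn : H.Connected) (u v : α) :
    (glueGraph H b a).dist (.inl u) (.inl v) = H.dist u v :=
  dist_eq_gluedDist hconn _ _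

lemma dist_inl_inr (hconn : H.Connected) (u : α) (v : {x : α // x ≠ a}) :
    (glueGraph H b a).dist (.inl u) (.inr v) = H.dist u b + H.dist a v :=
  dist_eq_gluedDist hconn _ _

lemma dist_inr_inl (hconn : H.Connected) (u : {x : α // x ≠ a}) (v : α) :
    (glueGraph H b a).dist (.inr u) (.inl v) = H.dist a u + H.dist v b :=
  dist_eq_gluedDist hconn _ _

variable [Fintype α]

lemma dist_add_gecc_le_gecc_inl (hconn : H.Connected) (u : α) :
    H.dist u b + gecc H a ≤ gecc (glueGraph H b a) (.inl u) := by
  have : Nonempty α := ⟨a⟩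
  obtain ⟨v, hv⟩ := exists_dist_eq_gecc (G := H) a
  rcases eq_or_ne v a with rfl | hva
  · rw [← hv, SimpleGraph.dist_self, add_zero, ← dist_inl_inl (a := v) hconn]
    exact dist_le_gecc _ _
  · rw [← hv, ← dist_inl_inr (v := ⟨v, hva⟩) hconn]
    exact dist_le_gecc _ _

lemma dist_add_gecc_le_gecc_inr (hconn : H.Connected) (v : {x : α // x ≠ a}) :
    H.dist a v + gecc H b ≤ gecc (glueGraph H b a) (.inr v) := by
  have : Nonempty α := ⟨a⟩
  obtain ⟨w, hw⟩ := exists_dist_eq_gecc (G := H) b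
  rw [← hw, SimpleGraph.dist_comm (u := b), ← dist_inr_inl hconn]
  exact dist_le_gecc _ _

theorem gecc_inl_gluing (hconn : H.Connected) :
    gecc (glueGraph H b a) (.inl b) = max (gecc H b) (gecc H a) := by
  refine le_antisymm (gecc_le_iff.2 ?_) (max_le ?_ ?_)
  · rintro (v | v)
    · rw [dist_inl_inl hconn]
      exact (dist_le_gecc b v).trans (le_max_left _ _)
    · rw [dist_inl_inr hconn, SimpleGraph.dist_self, zero_add]
      exact (dist_le_gecc a v).trans (le_max_right _ _)
  · refine gecc_le_iff.2 fun v => ?_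
    rw [← dist_inl_inl (a := a) hconn]
    exact dist_le_gecc _ _
  · simpa using dist_add_gecc_le_gecc_inl (b := b) (a := a) hconn b

end glueGraph

theorem stmt_7_general {α : Type} [Fintype α] [DecidableEq α] (H : SimpleGraph α)
    (hconn : H.Connected) (a b : α)
    (hea : gecc H a = gdiam H) (heb : gecc H b = gdiam H) :
    (glueGraph H b a).Connected ∧
      gecc (glueGraph H b a) (Sum.inl b) = gdiam H ∧
      (∀ x : α ⊕ {x : α // x ≠ a}, x ≠ Sum.inl b →
        gdiam H < gecc (glueGraph H b a) x) ∧
      gradius (glueGraph H b a) = gdiam H ∧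
      (∀ x : α ⊕ {x : α // x ≠ a},
        gecc (glueGraph H b a) x = gradius (glueGraph H b a) → x = Sum.inl b) := by
  have hc : gecc (glueGraph H b a) (.inl b) = gdiam H := by
    rw [glueGraph.gecc_inl_gluing hconn, hea, heb, max_self]
  have hlt : ∀ x, x ≠ .inl b → gdiam H < gecc (glueGraph H b a) x := by
    rintro (u | v) hx
    · have hub : 0 < H.dist u b := hconn.pos_dist_of_ne (by rintro rfl; exact hx rfl)
      have := glueGraph.dist_add_gecc_le_gecc_inl (b := b) (a := a) hconn u
      omega
    · have hav : 0 < H.dist a v := hconn.pos_dist_of_ne v.2.symm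
      have := glueGraph.dist_add_gecc_le_gecc_inr (b := b) hconn v
      omega
  have hrad : gradius (glueGraph H b a) = gdiam H :=
    hc ▸ gradius_eq_gecc_of_forall_lt (hc ▸ hlt)
  refine ⟨glueGraph.connected hconn, hc, hlt, hrad, fun x hx => ?_⟩
  by_contra hne
  exact (hlt x hne).ne' (hx.trans hrad)

/-- let `H` be a connected finite simple graph and `a ≠ b` vertices with
`ecc_H(a) = ecc_H(b) = dist_H(a,b) = diam(H)`.  Let `K` be obtained from two disjoint
copies of `H` by identifying the `b` of the first copy with the `a` of the second copy,
and let `c` be the identified vertex.  Then `K` is connected, `ecc_K(c) = diam(H)`, every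
vertex `x ≠ c` of `K` has `ecc_K(x) > diam(H)`, `radius(K) = diam(H)`, and `c` is the
unique vertex of `K` of minimum eccentricity. -/
theorem stmt_7 {α : Type} [Fintype α] [DecidableEq α] (H : SimpleGraph α)
    (hconn : H.Connected) (a b : α) (hab : a ≠ b)
    (hea : gecc H a = gdiam H) (heb : gecc H b = gdiam H)
    (hd : H.dist a b = gdiam H) :
    (glueGraph H b a).Connected ∧
      gecc (glueGraph H b a) (Sum.inl b) = gdiam H ∧
      (∀ x : α ⊕ {x : α // x ≠ a}, x ≠ Sum.inl b →
        gdiam H < gecc (glueGraph H b a) x) ∧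
      gradius (glueGraph H b a) = gdiam H ∧
      (∀ x : α ⊕ {x : α // x ≠ a},
        gecc (glueGraph H b a) x = gradius (glueGraph H b a) → x = Sum.inl b) :=
  stmt_7_general H hconn a b hea heb
end

section
/- Let n ≥ 3 and let a, b be integers with 1 ≤ a ≤ n−1, 1 ≤ b ≤ n−1, and a ≠ b. Define the simple graph G' on vertex set {0,1,…,n−1} whose edge set consists of: the edges {i, i+1} for every 0 ≤ i ≤ n−2 with i+1 ∉ {a,b}; the edge {0,a}; the edge {a−1,b−1}; and, provided b ≠ n−1, the edge {b,n−1}. Then G' is connected if and only if b < a; moreover, if a < b then G' has exactly two connected components, with vertex sets {0,…,b−1} and {b,…,n−1}. -/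
/-! Away from `a` and `b` the graph is the path `0 — 1 — ⋯ — n-1`, cut into the blocks
`[0, min a b)`, `[min a b, max a b)` and `[max a b, n)`; the edge `{b, n-1}` stays inside the
last one and the edge `{0, a}` joins the block starting at `a` to that of `0`. If `b < a`, the
edge `{a-1, b-1}` joins `[b, a)` to `[0, b)` as well, so the graph is connected. If `a < b`, no
edge crosses `b`, so the side of `b` a vertex lies on is invariant under reachability. -/

namespace SimpleGraph

variable {V : Type*} {G : SimpleGraph V}

theorem Reachable.iff_of_forall_adj {p : V → Prop} (hp : ∀ x y, G.Adj x y → (p x ↔ p y))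
    {x y : V} (h : G.Reachable x y) : p x ↔ p y := by
  rw [reachable_iff_reflTransGen] at h
  induction h with
  | refl => rfl
  | tail _ hadj ih => exact ih.trans (hp _ _ hadj)

theorem reachable_of_adj_of_val_succ {n : ℕ} {G : SimpleGraph (Fin n)} {i j : Fin n}
    (hij : i ≤ j) (h : ∀ k l : Fin n, i ≤ k → (k : ℕ) + 1 = l → l ≤ j → G.Adj k l) :
    G.Reachable i j := by
  obtain ⟨j, hj⟩ := j
  induction j with
  | zero => rw [le_antisymm hij (Fin.le_def.2 (Nat.zero_le _))]
  | succ j ih =>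
    rcases hij.eq_or_lt with rfl | hlt
    · rfl
    have hij' : i ≤ ⟨j, by omega⟩ := Nat.lt_succ_iff.mp hlt
    have hstep : G.Adj ⟨j, by omega⟩ ⟨j + 1, hj⟩ := h _ _ hij' rfl le_rfl
    refine (ih (by omega) hij' fun k l hk hkl hl => h k l hk hkl ?_).trans hstep.reachable
    exact hl.trans (Fin.le_def.2 (Nat.le_succ j))

end SimpleGraph

open SimpleGraph

def rewiredPath (n a b : ℕ) : SimpleGraph (Fin n) :=
  SimpleGraph.fromRel fun x y : Fin n =>
    ((x : ℕ) + 1 = (y : ℕ) ∧ (y : ℕ) ≠ a ∧ (y : ℕ) ≠ b) ∨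
    ((x : ℕ) = 0 ∧ (y : ℕ) = a) ∨
    ((x : ℕ) = a - 1 ∧ (y : ℕ) = b - 1) ∨
    (b ≠ n - 1 ∧ (x : ℕ) = b ∧ (y : ℕ) = n - 1)

namespace rewiredPath

variable {n a b : ℕ}

theorem adj_zero (ha1 : 1 ≤ a) (ha : a < n) :
    (rewiredPath n a b).Adj ⟨0, by omega⟩ ⟨a, ha⟩ := by
  rw [rewiredPath, fromRel_adj]
  exact ⟨Fin.ne_of_val_ne (by omega : 0 ≠ a), .inl (.inr (.inl ⟨rfl, rfl⟩))⟩

theorem reachable_of_le {i j : ℕ} (hi : i < n) (hj : j < n) (hij : i ≤ j)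
    (ha : a ≤ i ∨ j < a) (hb : b ≤ i ∨ j < b) :
    (rewiredPath n a b).Reachable ⟨i, hi⟩ ⟨j, hj⟩ := by
  refine reachable_of_adj_of_val_succ hij fun k l hk hkl hl => ?_
  change i ≤ (k : ℕ) at hk
  change (l : ℕ) ≤ j at hl
  rw [rewiredPath, fromRel_adj]
  exact ⟨fun h => by omega, .inl (.inl ⟨hkl, by omega, by omega⟩)⟩

theorem lt_iff_lt_of_adj (hab : a < b) {x y : Fin n} (h : (rewiredPath n a b).Adj x y) :
    ((x : ℕ) < b ↔ (y : ℕ) < b) := by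
  rw [rewiredPath, fromRel_adj] at h
  obtain ⟨-, h | h⟩ := h <;>
    rcases h with ⟨_, _, _⟩ | ⟨_, _⟩ | ⟨_, _⟩ | ⟨_, _, _⟩ <;> omega

theorem reachable_iff_of_lt (ha1 : 1 ≤ a) (hb : b < n) (hab : a < b) (x y : Fin n) :
    (rewiredPath n a b).Reachable x y ↔ ((x : ℕ) < b ↔ (y : ℕ) < b) := by
  refine ⟨Reachable.iff_of_forall_adj fun _ _ => lt_iff_lt_of_adj hab, fun hxy => ?_⟩
  have below (v : Fin n) (hv : (v : ℕ) < b) : (rewiredPath n a b).Reachable ⟨0, by omega⟩ v := by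
    rcases lt_or_ge (v : ℕ) a with hva | hav
    · exact reachable_of_le _ v.isLt (Nat.zero_le _) (by omega) (by omega)
    · exact (adj_zero ha1 (by omega)).reachable.trans
        (reachable_of_le _ v.isLt hav (by omega) (by omega))
  have above (v : Fin n) (hv : b ≤ (v : ℕ)) : (rewiredPath n a b).Reachable ⟨b, hb⟩ v :=
    reachable_of_le _ v.isLt hv (by omega) (by omega)
  by_cases hx : (x : ℕ) < b
  · exact (below x hx).symm.trans (below y (hxy.1 hx))
  · exact (above x (by omega)).symm.trans (above y (by rw [hxy] at hx; omega))

theorem reachable_zero_of_lt (hb1 : 1 ≤ b) (ha : a < n) (hba : b < a) (v : Fin n) :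
    (rewiredPath n a b).Reachable ⟨0, by omega⟩ v := by
  have hb0 : (rewiredPath n a b).Reachable ⟨0, by omega⟩ ⟨b, by omega⟩ := by
    have hcross : (rewiredPath n a b).Adj ⟨a - 1, by omega⟩ ⟨b - 1, by omega⟩ := by
      rw [rewiredPath, fromRel_adj]
      exact ⟨Fin.ne_of_val_ne (by omega : a - 1 ≠ b - 1), .inl (.inr (.inr (.inl ⟨rfl, rfl⟩)))⟩
    exact (reachable_of_le _ _ (Nat.zero_le _) (by omega) (by omega)).trans
      (hcross.symm.reachable.trans (reachable_of_le _ _ (by omega) (by omega) (by omega)).symm)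
  rcases lt_or_ge (v : ℕ) b with hvb | hbv
  · exact reachable_of_le _ v.isLt (Nat.zero_le _) (by omega) (by omega)
  rcases lt_or_ge (v : ℕ) a with hva | hav
  · exact hb0.trans (reachable_of_le _ v.isLt hbv (by omega) (by omega))
  · exact (adj_zero (by omega) ha).reachable.trans
      (reachable_of_le _ v.isLt hav (by omega) (by omega))

theorem connected_iff (ha1 : 1 ≤ a) (ha : a < n) (hb1 : 1 ≤ b) (hb : b < n) (hab : a ≠ b) :
    (rewiredPath n a b).Connected ↔ b < a := by
  refine ⟨fun hconn => ?_, fun hba => ?_⟩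
  · by_contra! hab'
    have := (reachable_iff_of_lt ha1 hb (lt_of_le_of_ne hab' hab) ⟨0, by omega⟩ ⟨b, hb⟩).1
      (hconn.preconnected _ _)
    exact lt_irrefl b (this.1 (by omega : 0 < b))
  · exact (connected_iff_exists_forall_reachable _).2 ⟨_, reachable_zero_of_lt hb1 ha hba⟩

end rewiredPath

theorem stmt_9_general (n a b : ℕ) (ha1 : 1 ≤ a) (ha2 : a ≤ n - 1)
    (hb1 : 1 ≤ b) (hb2 : b ≤ n - 1) (hab : a ≠ b) :
    ∀ G' : SimpleGraph (Fin n),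
      G' = SimpleGraph.fromRel (fun x y : Fin n =>
        ((x : ℕ) + 1 = (y : ℕ) ∧ (y : ℕ) ≠ a ∧ (y : ℕ) ≠ b) ∨
        ((x : ℕ) = 0 ∧ (y : ℕ) = a) ∨
        ((x : ℕ) = a - 1 ∧ (y : ℕ) = b - 1) ∨
        (b ≠ n - 1 ∧ (x : ℕ) = b ∧ (y : ℕ) = n - 1)) →
      (G'.Connected ↔ b < a) ∧
      (a < b → ∀ x y : Fin n, G'.Reachable x y ↔ ((x : ℕ) < b ↔ (y : ℕ) < b)) := by
  rintro G' rfl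
  have ha : a < n := by omega
  have hb : b < n := by omega
  exact ⟨rewiredPath.connected_iff ha1 ha hb1 hb hab,
    fun hab' => rewiredPath.reachable_iff_of_lt ha1 hb hab'⟩

/-- let `n ≥ 3` and `a b` be integers with `1 ≤ a ≤ n-1`, `1 ≤ b ≤ n-1` and
`a ≠ b`.  The simple graph `G'` on `{0,…,n-1}` with edges `{i,i+1}` for `0 ≤ i ≤ n-2` with
`i+1 ∉ {a,b}`, the edge `{0,a}`, the edge `{a-1,b-1}`, and (provided `b ≠ n-1`) the edge
`{b,n-1}`, is connected iff `b < a`; moreover, if `a < b` then `G'` has exactly two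
connected components, with vertex sets `{0,…,b-1}` and `{b,…,n-1}` (i.e. two vertices are
reachable from one another iff they lie on the same side of `b`). -/
theorem stmt_9 (n a b : ℕ) (hn : 3 ≤ n) (ha1 : 1 ≤ a) (ha2 : a ≤ n - 1)
    (hb1 : 1 ≤ b) (hb2 : b ≤ n - 1) (hab : a ≠ b) :
    ∀ G' : SimpleGraph (Fin n),
      G' = SimpleGraph.fromRel (fun x y : Fin n =>
        ((x : ℕ) + 1 = (y : ℕ) ∧ (y : ℕ) ≠ a ∧ (y : ℕ) ≠ b) ∨
        ((x : ℕ) = 0 ∧ (y : ℕ) = a) ∨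
        ((x : ℕ) = a - 1 ∧ (y : ℕ) = b - 1) ∨
        (b ≠ n - 1 ∧ (x : ℕ) = b ∧ (y : ℕ) = n - 1)) →
      (G'.Connected ↔ b < a) ∧
      (a < b → ∀ x y : Fin n, G'.Reachable x y ↔ ((x : ℕ) < b ↔ (y : ℕ) < b)) :=
  stmt_9_general n a b ha1 ha2 hb1 hb2 hab
end

section
/- Let G be a finite simple graph with vertex set V and edge set E, and let w : E → ℝ be an injective weight function. Let F be the set of edges e = {u,v} ∈ E such that u and v are not connected in the spanning subgraph of G whose edge set is { f ∈ E : w(f) < w(e) }. Then the spanning subgraph (V, F) is acyclic (a forest), and for all u, v ∈ V, u and v are connected in (V, F) if and only if they are connected in G; that is, (V, F) is a spanning forest of G (it is the unique minimum-weight spanning forest of (G, w)). -/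
/-!
Both halves are the classical exchange arguments for Kruskal's rule. On a cycle of the
kept graph, the heaviest edge `e` is joined by the rest of the cycle, whose edges are all
strictly lighter (weights are injective), so `e` should have been rejected. Conversely,
by well-founded induction on the weight, the endpoints of each edge `e` of `G` are joined
in the kept graph: either `e` itself is kept, or its endpoints are joined by lighter
edges, whose endpoints are joined by the induction hypothesis.
-/

open SimpleGraph

namespace SimpleGraph

variable {V : Type} {α : Type*}

theorem Reachable.of_forall_adj_reachable {G H : SimpleGraph V}
    (h : ∀ a b, G.Adj a b → H.Reachable a b) {u v : V} (huv : G.Reachable u v) :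
    H.Reachable u v := by
  obtain ⟨p⟩ := huv
  induction p with
  | nil => rfl
  | cons hadj _ ih => exact (h _ _ hadj).trans ih

theorem Reachable.of_sym2_eq {G : SimpleGraph V} {u v x y : V} (h : s(x, y) = s(u, v))
    (huv : G.Reachable u v) : G.Reachable x y := by
  rcases Sym2.eq_iff.mp h with ⟨rfl, rfl⟩ | ⟨rfl, rfl⟩
  exacts [huv, huv.symm]

theorem Walk.IsCycle.reachable_deleteEdges_of_mem_edges {G : SimpleGraph V} {a u v : V}
    {c : G.Walk a a} (hc : c.IsCycle) (he : s(u, v) ∈ c.edges) :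
    ((fromEdgeSet {f | f ∈ c.edges}).deleteEdges {s(u, v)}).Reachable u v := by
  have hsub : ∀ f ∈ c.edges, f ∈ (fromEdgeSet {f | f ∈ c.edges}).edgeSet := fun f hf =>
    (edgeSet_fromEdgeSet _).symm ▸ ⟨hf, G.not_isDiag_of_mem_edgeSet (c.edges_subset_edgeSet hf)⟩
  refine (adj_and_reachable_delete_edges_iff_exists_cycle.mpr
    ⟨a, c.transfer _ hsub, hc.transfer hsub, ?_⟩).2
  rwa [Walk.edges_transfer]

section Kruskal

variable [LinearOrder α] (G : SimpleGraph V) (w : Sym2 V → α)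

def lighterGraph (e : Sym2 V) : SimpleGraph V :=
  fromEdgeSet {f | f ∈ G.edgeSet ∧ w f < w e}

def kruskalEdgeSet : Set (Sym2 V) :=
  {e | e ∈ G.edgeSet ∧ ∀ u v : V, e = s(u, v) → ¬ (G.lighterGraph w e).Reachable u v}

variable {G w}

theorem mem_kruskalEdgeSet_iff {x y : V} :
    s(x, y) ∈ G.kruskalEdgeSet w ↔
      G.Adj x y ∧ ¬ (G.lighterGraph w s(x, y)).Reachable x y := by
  refine and_congr_right fun _ => ⟨fun h => h x y rfl, fun h u v hxy huv => ?_⟩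
  exact h (huv.of_sym2_eq hxy)

theorem fromEdgeSet_kruskalEdgeSet_le : fromEdgeSet (G.kruskalEdgeSet w) ≤ G :=
  (fromEdgeSet_le G).mpr fun _ he => he.1.1

theorem isAcyclic_fromEdgeSet_kruskalEdgeSet (hw : Set.InjOn w G.edgeSet) :
    (fromEdgeSet (G.kruskalEdgeSet w)).IsAcyclic := by
  classical
  intro a c hc
  have mem_kruskal : ∀ f ∈ c.edges, f ∈ G.kruskalEdgeSet w := fun f hf =>
    ((edgeSet_fromEdgeSet _) ▸ c.edges_subset_edgeSet hf).1
  have hne : c.edges.toFinset.Nonempty := by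
    cases c with
    | nil => exact absurd rfl hc.ne_nil
    | cons h q => simp
  obtain ⟨⟨u, v⟩, he, hmax⟩ := c.edges.toFinset.exists_max_image w hne
  rw [List.mem_toFinset] at he
  have heG : s(u, v) ∈ G.edgeSet := (mem_kruskal _ he).1
  refine (mem_kruskalEdgeSet_iff.mp (mem_kruskal _ he)).2
    ((hc.reachable_deleteEdges_of_mem_edges he).mono fun x y hxy => ?_)
  obtain ⟨⟨hxyc, hxy⟩, hne⟩ := deleteEdges_adj.mp hxy
  have hxyG : s(x, y) ∈ G.edgeSet := (mem_kruskal _ hxyc).1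
  have hlt : w s(x, y) < w s(u, v) :=
    (hmax _ (List.mem_toFinset.mpr hxyc)).lt_of_ne fun h => hne (hw hxyG heG h)
  exact (fromEdgeSet_adj _).mpr ⟨⟨hxyG, hlt⟩, hxy⟩

theorem reachable_fromEdgeSet_kruskalEdgeSet_of_adj [Finite V] {x y : V} (hxy : G.Adj x y) :
    (fromEdgeSet (G.kruskalEdgeSet w)).Reachable x y := by
  suffices ∀ e x y, e = s(x, y) → G.Adj x y → (fromEdgeSet (G.kruskalEdgeSet w)).Reachable x y
    from this _ x y rfl hxy
  intro e
  induction e using (Finite.wellFounded_of_trans_of_irrefl (InvImage (· < ·) w)).induction with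
  | _ e ih =>
  rintro x y rfl hxy
  by_cases hkept : s(x, y) ∈ G.kruskalEdgeSet w
  · exact ((fromEdgeSet_adj _).mpr ⟨hkept, hxy.ne⟩).reachable
  · have hlighter : (G.lighterGraph w s(x, y)).Reachable x y := by
      simpa [mem_kruskalEdgeSet_iff, hxy] using hkept
    refine hlighter.of_forall_adj_reachable fun a b hab => ?_
    obtain ⟨⟨habG, hlt⟩, -⟩ := (fromEdgeSet_adj _).mp hab
    exact ih _ hlt a b rfl habG

theorem reachable_fromEdgeSet_kruskalEdgeSet_iff [Finite V] {u v : V} :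
    (fromEdgeSet (G.kruskalEdgeSet w)).Reachable u v ↔ G.Reachable u v :=
  ⟨fun h => h.mono fromEdgeSet_kruskalEdgeSet_le,
    Reachable.of_forall_adj_reachable fun _ _ => reachable_fromEdgeSet_kruskalEdgeSet_of_adj⟩

end Kruskal

end SimpleGraph

/-- let `G` be a finite simple graph with edge weights `w` that are injective
on the edge set, and let `F` be the set of edges `e = {u,v}` of `G` such that `u` and `v`
are not connected in the spanning subgraph of `G` whose edges are the edges of `G` of
weight smaller than `w e`.  Then the spanning subgraph `(V, F)` is acyclic, and two
vertices are connected in `(V, F)` iff they are connected in `G`; that is, `(V, F)` is a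
spanning forest of `G` (the unique minimum-weight spanning forest). -/
theorem stmt_11 {V : Type} [Fintype V] (G : SimpleGraph V) (w : Sym2 V → ℝ)
    (hw : Set.InjOn w G.edgeSet) :
    ∀ F : Set (Sym2 V),
      F = {e | e ∈ G.edgeSet ∧ ∀ u v : V, e = s(u, v) →
            ¬ (SimpleGraph.fromEdgeSet {f | f ∈ G.edgeSet ∧ w f < w e}).Reachable u v} →
      (SimpleGraph.fromEdgeSet F).IsAcyclic ∧
      (∀ u v : V, (SimpleGraph.fromEdgeSet F).Reachable u v ↔ G.Reachable u v) := by
  rintro F rfl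
  exact ⟨isAcyclic_fromEdgeSet_kruskalEdgeSet hw,
    fun _ _ => reachable_fromEdgeSet_kruskalEdgeSet_iff⟩
end
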